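/- arXiv:1510.07284 — 5 statements merged into one kernel-verified Lean document; each statement's English description precedes it below -/
import Mathlib

section
/- For all real numbers a, b > 0 and θ with 0 < θ ≤ 1, one has θ·|a−b|·(2/(a+b))^{1−θ} ≤ |a^θ − b^θ| ≤ θ·|a−b|·(a^{θ−1} + b^{θ−1})/2. -/
open Real Set

/-!
Put `f x = x ^ θ` and `g x = θ * x ^ (θ - 1)`, which is convex since `θ - 1 ≤ 0`. Then
`a ^ θ - b ^ θ = ∫_b^a g`, and the two bounds are the Hermite–Hadamard inequalities
`(a - b) g((a + b) / 2) ≤ ∫_b^a g ≤ (a - b) (g a + g b) / 2`, because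
`(2 / (a + b)) ^ (1 - θ) = ((a + b) / 2) ^ (θ - 1)`.
They need no integration: on `[b, a] = [m - h, m + h]` the function `s ↦ f (m + s) - f (m - s)`
has derivative `g (m + s) + g (m - s)`, which convexity pins between `2 g m` and
`g (m - h) + g (m + h)` for `0 ≤ s ≤ h`.
-/

theorem convexOn_rpow_of_nonpos {p : ℝ} (hp : p ≤ 0) :
    ConvexOn ℝ (Ioi 0) fun x : ℝ ↦ x ^ p := by
  refine convexOn_of_hasDerivWithinAt2_nonneg (convex_Ioi 0) (f' := fun x ↦ p * x ^ (p - 1))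
    (f'' := fun x ↦ p * ((p - 1) * x ^ (p - 1 - 1))) ?_ ?_ ?_ ?_
  · exact fun x hx ↦ (continuousAt_id.rpow_const (Or.inl (ne_of_gt hx))).continuousWithinAt
  all_goals simp only [interior_Ioi]; intro x (hx : 0 < x)
  · exact (hasDerivAt_rpow_const (Or.inl hx.ne')).hasDerivWithinAt
  · exact ((hasDerivAt_rpow_const (Or.inl hx.ne')).const_mul p).hasDerivWithinAt
  · have : 0 < x ^ (p - 1 - 1) := rpow_pos_of_pos hx _
    exact mul_nonneg_of_nonpos_of_nonpos hp (mul_nonpos_of_nonpos_of_nonneg (by linarith) this.le)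

theorem ConvexOn.two_mul_le_map_add_add_map_sub {s : Set ℝ} {g : ℝ → ℝ} (hg : ConvexOn ℝ s g)
    {m t : ℝ} (hplus : m + t ∈ s) (hminus : m - t ∈ s) : 2 * g m ≤ g (m + t) + g (m - t) := by
  have := hg.2 hplus hminus (by norm_num : (0 : ℝ) ≤ 1 / 2) (by norm_num : (0 : ℝ) ≤ 1 / 2)
    (by norm_num)
  simp only [smul_eq_mul] at this
  rw [show 1 / 2 * (m + t) + 1 / 2 * (m - t) = m by ring] at this
  linarith

theorem ConvexOn.map_add_add_map_sub_le {g : ℝ → ℝ} {m h t : ℝ}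
    (hg : ConvexOn ℝ (Icc (m - h) (m + h)) g) (ht : |t| ≤ h) :
    g (m + t) + g (m - t) ≤ g (m + h) + g (m - h) := by
  obtain ⟨hlo, hhi⟩ := abs_le.1 ht
  rcases (abs_nonneg t).trans ht |>.eq_or_lt with rfl | hpos
  · obtain rfl : t = 0 := by linarith
    rfl
  have hl : m - h ∈ Icc (m - h) (m + h) := ⟨le_rfl, by linarith⟩
  have hr : m + h ∈ Icc (m - h) (m + h) := ⟨by linarith, le_rfl⟩
  have chord (u : ℝ) (hu : |u| ≤ h) :
      g (m + u) ≤ (h - u) / (2 * h) * g (m - h) + (h + u) / (2 * h) * g (m + h) := by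
    obtain ⟨hu₁, hu₂⟩ := abs_le.1 hu
    have key := hg.2 hl hr (div_nonneg (by linarith) (by linarith) : 0 ≤ (h - u) / (2 * h))
      (div_nonneg (by linarith) (by linarith) : 0 ≤ (h + u) / (2 * h))
      (by field_simp; ring)
    simp only [smul_eq_mul] at key
    rwa [show (h - u) / (2 * h) * (m - h) + (h + u) / (2 * h) * (m + h) = m + u by
      field_simp; ring] at key
  have h₁ := chord t ht
  have h₂ := chord (-t) (by rwa [abs_neg])
  rw [← sub_eq_add_neg] at h₂
  have e₁ : (h - t) / (2 * h) + (h - -t) / (2 * h) = 1 := by field_simp; ring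
  have e₂ : (h + t) / (2 * h) + (h + -t) / (2 * h) = 1 := by field_simp; ring
  linear_combination h₁ + h₂ + g (m - h) * e₁ + g (m + h) * e₂

theorem image_sub_mem_Icc_of_hasDerivAt {F F' : ℝ → ℝ} {x y lo hi : ℝ} (hxy : x ≤ y)
    (hF : ∀ t ∈ Icc x y, HasDerivAt F (F' t) t) (hF' : ∀ t ∈ Ioo x y, F' t ∈ Icc lo hi) :
    F y - F x ∈ Icc (lo * (y - x)) (hi * (y - x)) := by
  have hcont : ContinuousOn F (Icc x y) := fun t ht ↦ (hF t ht).continuousAt.continuousWithinAt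
  have hdiff : DifferentiableOn ℝ F (interior (Icc x y)) := by
    rw [interior_Icc]
    exact fun t ht ↦ (hF t (Ioo_subset_Icc_self ht)).differentiableAt.differentiableWithinAt
  have hderiv : ∀ t ∈ interior (Icc x y), deriv F t ∈ Icc lo hi := by
    rw [interior_Icc]
    intro t ht
    rw [(hF t (Ioo_subset_Icc_self ht)).deriv]
    exact hF' t ht
  have hx : x ∈ Icc x y := left_mem_Icc.2 hxy
  have hy : y ∈ Icc x y := right_mem_Icc.2 hxy
  exact ⟨(convex_Icc x y).mul_sub_le_image_sub_of_le_deriv hcont hdiff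
      (fun t ht ↦ (hderiv t ht).1) x hx y hy hxy,
    (convex_Icc x y).image_sub_le_mul_sub_of_deriv_le hcont hdiff
      (fun t ht ↦ (hderiv t ht).2) x hx y hy hxy⟩

theorem ConvexOn.hermite_hadamard_of_hasDerivAt {f g : ℝ → ℝ} {a b : ℝ} (hab : a ≤ b)
    (hg : ConvexOn ℝ (Icc a b) g) (hf : ∀ x ∈ Icc a b, HasDerivAt f (g x) x) :
    (b - a) * g ((a + b) / 2) ≤ f b - f a ∧ f b - f a ≤ (b - a) * ((g a + g b) / 2) := by
  obtain ⟨m, h, rfl, rfl⟩ : ∃ m h, a = m - h ∧ b = m + h :=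
    ⟨(a + b) / 2, (b - a) / 2, by ring, by ring⟩
  rw [show (m - h + (m + h)) / 2 = m by ring, show m + h - (m - h) = 2 * h by ring]
  have hh : 0 ≤ h := by linarith
  have hderiv : ∀ s ∈ Icc 0 h,
      HasDerivAt (fun s ↦ f (m + s) - f (m - s)) (g (m + s) + g (m - s)) s := by
    rintro s ⟨hs₀, hsh⟩
    have hplus := (hf (m + s) ⟨by linarith, by linarith⟩).comp_const_add m s
    have hminus := (hf (m - s) ⟨by linarith, by linarith⟩).comp_const_sub m s
    simpa only [sub_neg_eq_add] using hplus.fun_sub hminus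
  have hderiv_mem : ∀ s ∈ Ioo 0 h,
      g (m + s) + g (m - s) ∈ Icc (2 * g m) (g (m + h) + g (m - h)) := by
    rintro s ⟨hs₀, hsh⟩
    exact ⟨hg.two_mul_le_map_add_add_map_sub ⟨by linarith, by linarith⟩
        ⟨by linarith, by linarith⟩,
      hg.map_add_add_map_sub_le (abs_le.2 ⟨by linarith, hsh.le⟩)⟩
  obtain ⟨hlo, hhi⟩ := image_sub_mem_Icc_of_hasDerivAt hh hderiv hderiv_mem
  simp only [add_zero, sub_zero, sub_self] at hlo hhi
  constructor <;> linarith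

theorem stmt0 (a b θ : ℝ) (ha : 0 < a) (hb : 0 < b) (hθ0 : 0 < θ) (hθ1 : θ ≤ 1) :
    θ * |a - b| * (2 / (a + b)) ^ (1 - θ) ≤ |a ^ θ - b ^ θ| ∧
      |a ^ θ - b ^ θ| ≤ θ * |a - b| * ((a ^ (θ - 1) + b ^ (θ - 1)) / 2) := by
  wlog hba : b ≤ a generalizing a b
  · have := this b a hb ha (le_of_not_ge hba)
    rwa [abs_sub_comm b a, abs_sub_comm (b ^ θ), add_comm b a, add_comm (b ^ (θ - 1))] at this
  have hg : ConvexOn ℝ (Icc b a) fun x ↦ θ * x ^ (θ - 1) :=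
    ((convexOn_rpow_of_nonpos (by linarith)).smul hθ0.le).subset (fun x hx ↦ hb.trans_le hx.1)
      (convex_Icc b a)
  have hf : ∀ x ∈ Icc b a, HasDerivAt (fun x ↦ x ^ θ) (θ * x ^ (θ - 1)) x :=
    fun x hx ↦ hasDerivAt_rpow_const (Or.inl (hb.trans_le hx.1).ne')
  obtain ⟨hlo, hhi⟩ := hg.hermite_hadamard_of_hasDerivAt hba hf
  have hmid : (2 / (a + b)) ^ (1 - θ) = ((b + a) / 2) ^ (θ - 1) := by
    rw [← inv_div, inv_rpow (by positivity), ← rpow_neg (by positivity), neg_sub, add_comm]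
  rw [abs_of_nonneg (sub_nonneg.2 hba),
    abs_of_nonneg (sub_nonneg.2 (rpow_le_rpow hb.le hba hθ0.le)), hmid]
  constructor <;> linarith
end

section
/- For any a > 0, a/(1+a²) ≤ e^{a²/2} · ∫_a^∞ e^{−t²/2} dt ≤ 1/a. -/
/-!
Both bounds come from comparing `φ t = exp (-t² / 2)` on `(a, ∞)` with an exact derivative.
For the upper bound, `φ t ≤ (t / a) φ t` and `t φ t = -φ' t`, so the tail is at most `φ a / a`.
For the lower bound, `(1 + t⁻²) φ t` is the derivative of `-φ t / t`, so it integrates to `φ a / a`,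
while it is at most `(1 + a⁻²) φ t`.
-/

open Real MeasureTheory Set Filter Topology

lemma integrable_exp_neg_sq_div_two : Integrable fun t : ℝ => exp (-t ^ 2 / 2) := by
  simpa [neg_div, div_eq_inv_mul] using integrable_exp_neg_mul_sq (by norm_num : (0 : ℝ) < 1 / 2)

lemma integrable_mul_exp_neg_sq_div_two : Integrable fun t : ℝ => t * exp (-t ^ 2 / 2) := by
  simpa [neg_div, div_eq_inv_mul] using
    integrable_mul_exp_neg_mul_sq (by norm_num : (0 : ℝ) < 1 / 2)

lemma hasDerivAt_exp_neg_sq_div_two (t : ℝ) :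
    HasDerivAt (fun t : ℝ => exp (-t ^ 2 / 2)) (-t * exp (-t ^ 2 / 2)) t := by
  have h : HasDerivAt (fun t : ℝ => -t ^ 2 / 2) (-t) t := by
    refine ((hasDerivAt_pow 2 t).fun_neg.div_const 2).congr_deriv ?_
    push_cast
    ring
  simpa [mul_comm] using h.exp

lemma tendsto_exp_neg_sq_div_two_atTop :
    Tendsto (fun t : ℝ => exp (-t ^ 2 / 2)) atTop (𝓝 0) :=
  tendsto_exp_atBot.comp <|
    (tendsto_neg_atTop_atBot.comp (tendsto_pow_atTop two_ne_zero)).atBot_div_const two_pos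

lemma integral_Ioi_mul_exp_neg_sq_div_two (a : ℝ) :
    ∫ t in Ioi a, t * exp (-t ^ 2 / 2) = exp (-a ^ 2 / 2) := by
  have hderiv (t : ℝ) : HasDerivAt (fun t : ℝ => -exp (-t ^ 2 / 2)) (t * exp (-t ^ 2 / 2)) t := by
    simpa using (hasDerivAt_exp_neg_sq_div_two t).fun_neg
  rw [integral_Ioi_of_hasDerivAt_of_tendsto' (fun t _ => hderiv t)
    integrable_mul_exp_neg_sq_div_two.integrableOn tendsto_exp_neg_sq_div_two_atTop.neg]
  simp

lemma hasDerivAt_neg_exp_neg_sq_div_two_div {t : ℝ} (ht : t ≠ 0) :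
    HasDerivAt (fun t : ℝ => -exp (-t ^ 2 / 2) / t) ((1 + (t ^ 2)⁻¹) * exp (-t ^ 2 / 2)) t := by
  refine ((hasDerivAt_exp_neg_sq_div_two t).fun_neg.fun_div (hasDerivAt_id t) ht).congr_deriv ?_
  simp only [id]
  field_simp
  ring

lemma integral_Ioi_exp_neg_sq_div_two_le {a : ℝ} (ha : 0 < a) :
    ∫ t in Ioi a, exp (-t ^ 2 / 2) ≤ exp (-a ^ 2 / 2) / a := by
  have hint : IntegrableOn (fun t : ℝ => t / a * exp (-t ^ 2 / 2)) (Ioi a) := by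
    simpa [div_mul_eq_mul_div, div_eq_mul_inv, mul_right_comm] using
      (integrable_mul_exp_neg_sq_div_two.mul_const a⁻¹).integrableOn
  calc ∫ t in Ioi a, exp (-t ^ 2 / 2)
      ≤ ∫ t in Ioi a, t / a * exp (-t ^ 2 / 2) := by
        refine setIntegral_mono_on integrable_exp_neg_sq_div_two.integrableOn hint
          measurableSet_Ioi fun t (ht : a < t) => ?_
        exact le_mul_of_one_le_left (exp_pos _).le ((one_le_div ha).mpr ht.le)
    _ = exp (-a ^ 2 / 2) / a := by
        simp_rw [div_mul_eq_mul_div, integral_div, integral_Ioi_mul_exp_neg_sq_div_two]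

lemma le_integral_Ioi_exp_neg_sq_div_two {a : ℝ} (ha : 0 < a) :
    a / (1 + a ^ 2) * exp (-a ^ 2 / 2) ≤ ∫ t in Ioi a, exp (-t ^ 2 / 2) := by
  have hderiv : ∀ t ∈ Ici a, HasDerivAt (fun t : ℝ => -exp (-t ^ 2 / 2) / t)
      ((1 + (t ^ 2)⁻¹) * exp (-t ^ 2 / 2)) t :=
    fun t (ht : a ≤ t) => hasDerivAt_neg_exp_neg_sq_div_two_div (ha.trans_le ht).ne'
  have hnonneg : ∀ t ∈ Ioi a, 0 ≤ (1 + (t ^ 2)⁻¹) * exp (-t ^ 2 / 2) := fun t _ => by positivity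
  have hlim : Tendsto (fun t : ℝ => -exp (-t ^ 2 / 2) / t) atTop (𝓝 0) := by
    simpa [div_eq_mul_inv] using tendsto_exp_neg_sq_div_two_atTop.neg.mul tendsto_inv_atTop_zero
  have hint := integrableOn_Ioi_deriv_of_nonneg' hderiv hnonneg hlim
  have hmono : exp (-a ^ 2 / 2) / a ≤ (1 + (a ^ 2)⁻¹) * ∫ t in Ioi a, exp (-t ^ 2 / 2) := by
    calc exp (-a ^ 2 / 2) / a = ∫ t in Ioi a, (1 + (t ^ 2)⁻¹) * exp (-t ^ 2 / 2) := by
          rw [integral_Ioi_of_hasDerivAt_of_nonneg' hderiv hnonneg hlim]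
          ring
      _ ≤ ∫ t in Ioi a, (1 + (a ^ 2)⁻¹) * exp (-t ^ 2 / 2) := by
          refine setIntegral_mono_on hint (integrable_exp_neg_sq_div_two.const_mul _).integrableOn
            measurableSet_Ioi fun t (ht : a < t) => ?_
          gcongr
      _ = (1 + (a ^ 2)⁻¹) * ∫ t in Ioi a, exp (-t ^ 2 / 2) := integral_const_mul _ _
  rw [div_mul_eq_mul_div, div_le_iff₀ (by positivity)]
  calc a * exp (-a ^ 2 / 2) = a ^ 2 * (exp (-a ^ 2 / 2) / a) := by field_simp
    _ ≤ a ^ 2 * ((1 + (a ^ 2)⁻¹) * ∫ t in Ioi a, exp (-t ^ 2 / 2)) := by gcongr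
    _ = (∫ t in Ioi a, exp (-t ^ 2 / 2)) * (1 + a ^ 2) := by field_simp; ring

theorem stmt1 (a : ℝ) (ha : 0 < a) :
    a / (1 + a ^ 2) ≤ Real.exp (a ^ 2 / 2) * ∫ t in Set.Ioi a, Real.exp (-t ^ 2 / 2) ∧
      Real.exp (a ^ 2 / 2) * ∫ t in Set.Ioi a, Real.exp (-t ^ 2 / 2) ≤ 1 / a := by
  have hexp : exp (a ^ 2 / 2) * exp (-a ^ 2 / 2) = 1 := by
    rw [← exp_add, neg_div, add_neg_cancel, exp_zero]
  constructor
  · calc a / (1 + a ^ 2) = exp (a ^ 2 / 2) * (a / (1 + a ^ 2) * exp (-a ^ 2 / 2)) := by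
          rw [mul_left_comm, hexp, mul_one]
      _ ≤ _ := by gcongr; exact le_integral_Ioi_exp_neg_sq_div_two ha
  · calc exp (a ^ 2 / 2) * ∫ t in Ioi a, exp (-t ^ 2 / 2)
        ≤ exp (a ^ 2 / 2) * (exp (-a ^ 2 / 2) / a) := by
          gcongr; exact integral_Ioi_exp_neg_sq_div_two_le ha
      _ = 1 / a := by rw [mul_div_assoc', hexp]
end

section
/- Let g₁, g₂ be independent standard Gaussian random variables and p ≥ 2. Then the function t ↦ P(| |g₁|^p − |g₂|^p | > t) is log-convex on (0, ∞). -/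
/-!
In polar coordinates a standard Gaussian vector of `ℝ²` is `R • (cos Θ, sin Θ)`, with `Θ` uniform
on `(-π, π)` and `R` independent of density `r e^{-r²/2}` on `(0, ∞)`. As
`φ x = ||x₁|^p - |x₂|^p|` is `p`-homogeneous,
`P(φ g > t) = E[exp (-(t / φ(cos Θ, sin Θ))^{2/p} / 2)]`. For `p ≥ 2` the map `t ↦ t^{2/p}` is
concave, so every integrand is log-convex in `t`, and Hölder's inequality makes an average of
log-convex functions log-convex.
-/

open MeasureTheory ProbabilityTheory
open Real Set Filter Topology
open scoped ENNReal

theorem convexOn_log_toReal_of_le_rpow_mul_rpow {E : Type*} [AddCommGroup E] [Module ℝ E]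
    {s : Set E} (hs : Convex ℝ s) {F : E → ℝ≥0∞} (hF₀ : ∀ x ∈ s, F x ≠ 0)
    (hF_top : ∀ x ∈ s, F x ≠ ⊤)
    (hF : ∀ x ∈ s, ∀ y ∈ s, ∀ a b : ℝ, 0 ≤ a → 0 ≤ b → a + b = 1 →
      F (a • x + b • y) ≤ F x ^ a * F y ^ b) :
    ConvexOn ℝ s fun x => Real.log (F x).toReal := by
  refine ⟨hs, fun x hx y hy a b ha hb hab => ?_⟩
  have hpos : ∀ z ∈ s, 0 < (F z).toReal := fun z hz => ENNReal.toReal_pos (hF₀ z hz) (hF_top z hz)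
  have hle : (F (a • x + b • y)).toReal ≤ (F x).toReal ^ a * (F y).toReal ^ b := by
    rw [ENNReal.toReal_rpow, ENNReal.toReal_rpow, ← ENNReal.toReal_mul]
    exact ENNReal.toReal_mono (by finiteness [hF_top x hx, hF_top y hy])
      (hF x hx y hy a b ha hb hab)
  calc Real.log (F (a • x + b • y)).toReal
      ≤ Real.log ((F x).toReal ^ a * (F y).toReal ^ b) :=
        Real.log_le_log (hpos _ (hs hx hy ha hb hab)) hle
    _ = a • Real.log (F x).toReal + b • Real.log (F y).toReal := by
        rw [Real.log_mul (by positivity [hpos x hx]) (by positivity [hpos y hy]),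
          Real.log_rpow (hpos x hx), Real.log_rpow (hpos y hy), smul_eq_mul, smul_eq_mul]

theorem gaussianReal_prod_gaussianReal :
    (gaussianReal 0 1).prod (gaussianReal 0 1) =
      volume.withDensity fun z : ℝ × ℝ =>
        ENNReal.ofReal ((2 * π)⁻¹ * exp (-(z.1 ^ 2 + z.2 ^ 2) / 2)) := by
  rw [gaussianReal_of_var_ne_zero _ one_ne_zero,
    prod_withDensity (measurable_gaussianPDF 0 1) (measurable_gaussianPDF 0 1),
    ← Measure.volume_eq_prod]
  congr with z
  rw [gaussianPDF, gaussianPDF, ← ENNReal.ofReal_mul (gaussianPDFReal_nonneg _ _ _)]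
  congr 1
  have h2π : (0 : ℝ) ≤ 2 * π := by positivity
  simp only [gaussianPDFReal, NNReal.coe_one, mul_one, sub_zero, div_eq_mul_inv]
  calc (√(2 * π))⁻¹ * exp (-z.1 ^ 2 * 2⁻¹) * ((√(2 * π))⁻¹ * exp (-z.2 ^ 2 * 2⁻¹))
      = (√(2 * π) * √(2 * π))⁻¹ * (exp (-z.1 ^ 2 * 2⁻¹) * exp (-z.2 ^ 2 * 2⁻¹)) := by ring
    _ = _ := by rw [Real.mul_self_sqrt h2π, ← Real.exp_add]; ring_nf

theorem lintegral_Ioi_mul_exp_neg_sq_div_two {a : ℝ} (ha : 0 ≤ a) :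
    ∫⁻ r in Ioi a, ENNReal.ofReal (r * exp (-r ^ 2 / 2)) = ENNReal.ofReal (exp (-a ^ 2 / 2)) := by
  have hint : IntegrableOn (fun r : ℝ => r * exp (-r ^ 2 / 2)) (Ioi a) := by
    have := integrable_rpow_mul_exp_neg_mul_sq (b := 1 / 2) (by norm_num) (s := 1) (by norm_num)
    simp only [Real.rpow_one] at this
    exact (this.congr (ae_of_all _ fun r => by ring_nf)).integrableOn
  have hderiv : ∀ x ∈ Ici a, HasDerivAt (fun r : ℝ => -exp (-r ^ 2 / 2))
      (x * exp (-x ^ 2 / 2)) x := fun x _ => by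
    have h : HasDerivAt (fun r : ℝ => -r ^ 2 / 2) (-x) x := by
      simpa [neg_div] using ((hasDerivAt_pow 2 x).div_const 2).fun_neg
    exact h.exp.fun_neg.congr_deriv (by ring)
  have hlim : Tendsto (fun r : ℝ => -exp (-r ^ 2 / 2)) atTop (𝓝 0) := by
    rw [← neg_zero]
    refine (tendsto_exp_atBot.comp ?_).neg
    exact (tendsto_neg_atBot_iff.mpr (tendsto_pow_atTop two_ne_zero)).atBot_div_const two_pos
  rw [← ofReal_integral_eq_lintegral_ofReal hint,
    integral_Ioi_of_hasDerivAt_of_tendsto' hderiv hint hlim, zero_sub, neg_neg]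
  exact (ae_restrict_iff' measurableSet_Ioi).mpr (ae_of_all _ fun x hx =>
    mul_nonneg (ha.trans hx.le) (exp_nonneg _))

/-- `P(c R^p > t)` for `R` of density `r e^{-r²/2}` on `(0, ∞)`, when `t > 0`. -/
noncomputable def rayleighPowTail (p t c : ℝ) : ℝ≥0∞ :=
  if 0 < c then ENNReal.ofReal (exp (-(t / c) ^ (2 / p) / 2)) else 0

@[fun_prop]
theorem measurable_rayleighPowTail (p t : ℝ) : Measurable (rayleighPowTail p t) :=
  Measurable.ite measurableSet_Ioi (by fun_prop) measurable_const

theorem lintegral_Ioi_indicator_lt_rpow_mul {p t : ℝ} (hp : 0 < p) (ht : 0 < t) (c : ℝ) :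
    ∫⁻ r in Ioi 0,
        {r : ℝ | t < r ^ p * c}.indicator (fun r => ENNReal.ofReal (r * exp (-r ^ 2 / 2))) r =
      rayleighPowTail p t c := by
  have hm : MeasurableSet {r : ℝ | t < r ^ p * c} :=
    measurableSet_lt measurable_const (by fun_prop)
  rw [lintegral_indicator hm, Measure.restrict_restrict hm, rayleighPowTail]
  split_ifs with hc
  · have hset : {r : ℝ | t < r ^ p * c} ∩ Ioi 0 = Ioi ((t / c) ^ p⁻¹) := by
      ext r
      simp only [mem_inter_iff, mem_Ioi, ← div_lt_iff₀ hc]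
      constructor
      · rintro ⟨h, hr⟩
        exact (rpow_inv_lt_iff_of_pos (div_pos ht hc).le hr.le hp).mpr h
      · intro h
        have hr : 0 < r := (rpow_nonneg (div_pos ht hc).le _).trans_lt h
        exact ⟨(rpow_inv_lt_iff_of_pos (div_pos ht hc).le hr.le hp).mp h, hr⟩
    have hsq : ((t / c) ^ p⁻¹) ^ 2 = (t / c) ^ (2 / p) := by
      rw [← rpow_natCast, ← rpow_mul (div_pos ht hc).le]
      ring_nf
    rw [hset, lintegral_Ioi_mul_exp_neg_sq_div_two (by positivity), hsq]
  · have hset : {r : ℝ | t < r ^ p * c} ∩ Ioi 0 = ∅ := by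
      ext r
      simp only [mem_inter_iff, mem_Ioi, mem_empty_iff_false, iff_false, not_and]
      intro h hr
      exact (mul_nonpos_of_nonneg_of_nonpos (rpow_nonneg hr.le p) (not_lt.mp hc)).not_gt
        (ht.trans h)
    rw [hset, Measure.restrict_empty, lintegral_zero_measure]

theorem gaussianReal_prod_measure_lt_of_homogeneous {φ : ℝ × ℝ → ℝ} (hφ : Measurable φ) {p : ℝ}
    (hp : 0 < p) (hφ_hom : ∀ r : ℝ, 0 < r → ∀ x, φ (r • x) = r ^ p * φ x) {t : ℝ} (ht : 0 < t) :
    (gaussianReal 0 1).prod (gaussianReal 0 1) {x | t < φ x} =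
      ∫⁻ θ, rayleighPowTail p t (φ (cos θ, sin θ)) ∂volume[|Ioo (-π) π] := by
  have hS : MeasurableSet {x | t < φ x} := measurableSet_lt measurable_const hφ
  set R : ℝ × ℝ → ℝ≥0∞ := fun q => {r : ℝ | t < r ^ p * φ (cos q.2, sin q.2)}.indicator
    (fun r => ENNReal.ofReal (r * exp (-r ^ 2 / 2))) q.1
  have hpolar : ∀ q ∈ polarCoord.target,
      ENNReal.ofReal q.1 • {x | t < φ x}.indicator
        (fun z : ℝ × ℝ => ENNReal.ofReal ((2 * π)⁻¹ * exp (-(z.1 ^ 2 + z.2 ^ 2) / 2)))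
        (polarCoord.symm q) = ENNReal.ofReal (2 * π)⁻¹ * R q := by
    rintro ⟨r, θ⟩ ⟨hr, -⟩
    have hsymm : polarCoord.symm (r, θ) = r • (cos θ, sin θ) := by
      simp [polarCoord_symm_apply]
    simp only [R, hsymm, Set.indicator_apply, mem_ofPred_eq, hφ_hom r hr, smul_eq_mul]
    split_ifs
    · rw [← ENNReal.ofReal_mul hr.le, ← ENNReal.ofReal_mul (by positivity)]
      congr 1
      simp only [Prod.smul_fst, Prod.smul_snd, smul_eq_mul, mul_pow, ← mul_add, cos_sq_add_sin_sq,
        mul_one]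
      ring
    · rw [mul_zero, mul_zero]
  have hR : Measurable R :=
    show Measurable ({q : ℝ × ℝ | t < q.1 ^ p * φ (cos q.2, sin q.2)}.indicator
        fun q => ENNReal.ofReal (q.1 * exp (-q.1 ^ 2 / 2))) from
      (by fun_prop : Measurable _).indicator (measurableSet_lt measurable_const (by fun_prop))
  rw [gaussianReal_prod_gaussianReal, withDensity_apply _ hS, ← lintegral_indicator hS,
    ← lintegral_comp_polarCoord_symm,
    setLIntegral_congr_fun polarCoord.open_target.measurableSet hpolar,
    lintegral_const_mul _ hR, show polarCoord.target = Ioi 0 ×ˢ Ioo (-π) π from rfl,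
    Measure.volume_eq_prod, ← Measure.prod_restrict, lintegral_prod_symm' _ hR]
  simp only [R, lintegral_Ioi_indicator_lt_rpow_mul hp ht]
  rw [ProbabilityTheory.cond, lintegral_smul_measure, Real.volume_Ioo, sub_neg_eq_add, ← two_mul,
    ← ENNReal.ofReal_inv_of_pos (by positivity), smul_eq_mul]

theorem rayleighPowTail_le_rpow_mul_rpow {p : ℝ} (hp : 2 ≤ p) (c : ℝ) {s t a b : ℝ} (hs : 0 ≤ s)
    (ht : 0 ≤ t) (ha : 0 ≤ a) (hb : 0 ≤ b) (hab : a + b = 1) :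
    rayleighPowTail p (a * s + b * t) c ≤
      rayleighPowTail p s c ^ a * rayleighPowTail p t c ^ b := by
  unfold rayleighPowTail
  split_ifs with hc
  · rw [ENNReal.ofReal_rpow_of_nonneg (exp_nonneg _) ha,
      ENNReal.ofReal_rpow_of_nonneg (exp_nonneg _) hb, ← ENNReal.ofReal_mul (by positivity),
      ← exp_mul, ← exp_mul, ← exp_add]
    refine ENNReal.ofReal_le_ofReal (exp_le_exp.mpr ?_)
    have hconc := (concaveOn_rpow (by positivity : 0 ≤ 2 / p) ((div_le_one (by linarith)).2 hp)).2
      (mem_Ici.mpr (div_nonneg hs hc.le)) (mem_Ici.mpr (div_nonneg ht hc.le)) ha hb hab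
    rw [smul_eq_mul, smul_eq_mul, smul_eq_mul, smul_eq_mul,
      show a * (s / c) + b * (t / c) = (a * s + b * t) / c by ring] at hconc
    linarith
  · exact bot_le

theorem stmt4 (p : ℝ) (hp : 2 ≤ p) :
    ConvexOn ℝ (Set.Ioi (0 : ℝ)) (fun t : ℝ =>
      Real.log ((((gaussianReal 0 1).prod (gaussianReal 0 1))
        {x : ℝ × ℝ | t < |(|x.1| ^ p - |x.2| ^ p)|}).toReal)) := by
  have hp₀ : 0 < p := by linarith
  set φ : ℝ × ℝ → ℝ := fun x => |(|x.1| ^ p - |x.2| ^ p)|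
  have hφ : Continuous φ := by fun_prop (disch := exact hp₀.le)
  have hφ_hom : ∀ r : ℝ, 0 < r → ∀ x, φ (r • x) = r ^ p * φ x := fun r hr x => by
    simp only [φ, Prod.smul_fst, Prod.smul_snd, smul_eq_mul, abs_mul, abs_of_pos hr,
      mul_rpow hr.le (abs_nonneg _), ← mul_sub, abs_of_pos (rpow_pos_of_pos hr p)]
  have hformula := fun t (ht : 0 < t) =>
    gaussianReal_prod_measure_lt_of_homogeneous hφ.measurable hp₀ hφ_hom ht
  have := (gaussianReal_absolutelyContinuous' 0 one_ne_zero).isOpenPosMeasure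
  refine convexOn_log_toReal_of_le_rpow_mul_rpow (convex_Ioi 0) (fun t ht => ?_)
    (fun _ _ => measure_ne_top _ _) (fun s hs t ht a b ha hb hab => ?_)
  · refine (isOpen_lt continuous_const hφ).measure_ne_zero _ ⟨((t + 1) ^ p⁻¹, 0), ?_⟩
    have ht' : 0 < t + 1 := by linarith [mem_Ioi.mp ht]
    simp [φ, abs_of_pos (rpow_pos_of_pos ht' _), rpow_inv_rpow ht'.le hp₀.ne', zero_rpow hp₀.ne',
      abs_of_pos ht']
  · rw [hformula _ (convex_Ioi 0 hs ht ha hb hab), hformula s hs, hformula t ht, smul_eq_mul,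
      smul_eq_mul]
    calc _ ≤ ∫⁻ θ, rayleighPowTail p s (φ (cos θ, sin θ)) ^ a *
            rayleighPowTail p t (φ (cos θ, sin θ)) ^ b ∂volume[|Ioo (-π) π] :=
          lintegral_mono fun θ => rayleighPowTail_le_rpow_mul_rpow hp _ hs.le ht.le ha hb hab
      _ ≤ _ := ENNReal.lintegral_mul_norm_pow_le (by fun_prop) (by fun_prop) ha hb hab
end

section
/- Let g₁, g₂ be independent standard Gaussian random variables, p ≥ 2 and r ≥ 1. Then there are absolute constants c, C > 0 such that c·r^{p/2}·σ_p^p ≤ (E | |g₁|^p − |g₂|^p |^r)^{1/r} ≤ C·r^{p/2}·σ_p^p, where σ_p^p = E|g₁|^p. -/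
/-!
Let `G q = momentScale q = (q / e) ^ (q / 2)`, the maximum of `x ↦ x ^ q * exp (-x ^ 2 / 2)` on
`x ≥ 0`, attained at `√q`. Comparing the logarithm of this function with its value at `√q`
through `log t ≤ t - 1` and `1 - 1 / t ≤ log t` bounds it above by `G q` times a Gaussian centred
at `√q`, and below by `G q / e` on the window `[√q, √q + 4/5]`; hence
`G q / 12 ≤ E|g|^q ≤ 2 G q`, the lower bound coming from the window alone. Moreover
`G (p r) ^ (1 / r) = r ^ (p / 2) * G p`.

Upper bound: `||a|^p - |b|^p|^r ≤ |a|^(pr) + |b|^(pr)`, so the `r`-th moment of `|g₁|^p - |g₂|^p`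
is at most `2 E|g|^(pr) ≤ 4 G (p r)`. Lower bound: on the event `|g₂| ≤ 1` (probability at least
`1/3`) with `g₁` in the window for `q = p r`, where `|g₁|^p ≥ 2`, the integrand is at least
`|g₁|^(pr) / 2^r`, so the moment is at least `G (p r) / (36 * 2^r)`. Taking `r`-th roots gives the
theorem with `c = 1/144` and `C = 48`.
-/

open MeasureTheory ProbabilityTheory Real Set

noncomputable def momentScale (q : ℝ) : ℝ := (q / rexp 1) ^ (q / 2)

lemma momentScale_pos {q : ℝ} (hq : 0 < q) : 0 < momentScale q :=
  rpow_pos_of_pos (by positivity) _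

lemma momentScale_mul_rpow_one_div {p r : ℝ} (hp : 0 ≤ p) (hr : 0 < r) :
    momentScale (p * r) ^ (1 / r) = r ^ (p / 2) * momentScale p := by
  rw [momentScale, momentScale, ← rpow_mul (by positivity),
    show p * r / 2 * (1 / r) = p / 2 by field_simp, mul_comm p, mul_div_assoc,
    mul_rpow hr.le (by positivity)]

lemma log_momentScale {q : ℝ} (hq : 0 < q) :
    log (momentScale q) = q / 2 * log q - q / 2 := by
  rw [momentScale, log_rpow (by positivity), log_div hq.ne' (exp_pos 1).ne', log_exp]
  ring

lemma rpow_mul_exp_neg_sq_le {q x : ℝ} (hq : 0 < q) (hx : 0 ≤ x) :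
    x ^ q * rexp (-x ^ 2 / 2) ≤ momentScale q * rexp (-(x - √q) ^ 2 / 2) := by
  rcases hx.eq_or_lt with rfl | hx
  · rw [zero_rpow hq.ne', zero_mul]
    exact (mul_pos (momentScale_pos hq) (exp_pos _)).le
  have hsq : 0 < √q := sqrt_pos.mpr hq
  have hlog : log (x / √q) ≤ x / √q - 1 := log_le_sub_one_of_pos (by positivity)
  rw [log_div hx.ne' hsq.ne', log_sqrt hq.le] at hlog
  rw [← exp_log (momentScale_pos hq), rpow_def_of_pos hx, ← exp_add, ← exp_add,
    exp_le_exp, log_momentScale hq]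
  have hqx : q * (x / √q) = √q * x := by
    field_simp; rw [sq_sqrt hq.le]
  nlinarith [mul_le_mul_of_nonneg_left hlog hq.le, sq_sqrt hq.le]

lemma abs_rpow_mul_exp_neg_sq_le {q : ℝ} (hq : 0 < q) (x : ℝ) :
    |x| ^ q * rexp (-x ^ 2 / 2) ≤
      momentScale q * (rexp (-(x - √q) ^ 2 / 2) + rexp (-(x + √q) ^ 2 / 2)) := by
  have h := rpow_mul_exp_neg_sq_le hq (abs_nonneg x)
  rw [sq_abs] at h
  have hG := momentScale_pos hq
  rcases le_total 0 x with hx | hx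
  · rw [abs_of_nonneg hx] at h ⊢
    nlinarith [exp_pos (-(x + √q) ^ 2 / 2)]
  · rw [abs_of_nonpos hx, show (-x - √q) ^ 2 = (x + √q) ^ 2 by ring] at h
    rw [abs_of_nonpos hx]
    nlinarith [exp_pos (-(x - √q) ^ 2 / 2)]

lemma momentScale_mul_exp_neg_one_le {q x : ℝ} (hq : 0 < q) (hx₁ : √q ≤ x)
    (hx₂ : x ≤ √q + 4 / 5) :
    momentScale q * rexp (-1) ≤ x ^ q * rexp (-x ^ 2 / 2) := by
  have hsq : 0 < √q := sqrt_pos.mpr hq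
  have hx : 0 < x := hsq.trans_le hx₁
  have hlog : 1 - (x / √q)⁻¹ ≤ log (x / √q) := one_sub_inv_le_log_of_pos (by positivity)
  rw [inv_div, log_div hx.ne' hsq.ne', log_sqrt hq.le] at hlog
  rw [← exp_log (momentScale_pos hq), rpow_def_of_pos hx, ← exp_add, ← exp_add,
    exp_le_exp, log_momentScale hq]
  -- the exponent drops by at most `3 (x - √q) ^ 2 / 2 ≤ 1` on this window
  have hqx : q * (1 - √q / x) ≥ √q * (x - √q) - (x - √q) ^ 2 := by
    rw [ge_iff_le, ← sub_nonneg]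
    have : q * (1 - √q / x) - (√q * (x - √q) - (x - √q) ^ 2) = (x - √q) ^ 3 / x := by
      field_simp
      linear_combination (√q - x) * sq_sqrt hq.le
    rw [this]; have := sub_nonneg.mpr hx₁; positivity
  nlinarith [mul_le_mul_of_nonneg_left hlog hq.le, sq_sqrt hq.le]

lemma gaussianPDFReal_zero_one (x : ℝ) :
    gaussianPDFReal 0 1 x = (√(2 * π))⁻¹ * rexp (-x ^ 2 / 2) := by
  simp [gaussianPDFReal]

lemma integrable_exp_neg_sub_sq_div_two (c : ℝ) :
    Integrable fun x : ℝ ↦ rexp (-(x - c) ^ 2 / 2) := by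
  have h := (integrable_exp_neg_mul_sq (by norm_num : (0 : ℝ) < 1 / 2)).comp_sub_right c
  convert h using 3; ring

lemma integral_exp_neg_sub_sq_div_two (c : ℝ) :
    ∫ x, rexp (-(x - c) ^ 2 / 2) = √(2 * π) := by
  rw [integral_sub_right_eq_self (fun x ↦ rexp (-x ^ 2 / 2)) c]
  simp_rw [show ∀ x : ℝ, -x ^ 2 / 2 = -(1 / 2) * x ^ 2 by intro x; ring]
  rw [integral_gaussian]; congr 1; ring

lemma integrable_abs_rpow_gaussianReal (μ : ℝ) (v : NNReal) {q : ℝ} (hq : 0 ≤ q) :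
    Integrable (fun x ↦ |x| ^ q) (gaussianReal μ v) := by
  simpa [hq] using (memLp_id_gaussianReal (μ := μ) (v := v) q.toNNReal).integrable_norm_rpow'

lemma setIntegral_gaussianReal_eq_setIntegral_mul {μ : ℝ} {v : NNReal} (hv : v ≠ 0)
    {f : ℝ → ℝ} {s : Set ℝ} (hs : MeasurableSet s) :
    ∫ x in s, f x ∂gaussianReal μ v = ∫ x in s, gaussianPDFReal μ v x * f x := by
  rw [gaussianReal_of_var_ne_zero μ hv, restrict_withDensity hs,
    integral_withDensity_eq_integral_toReal_smul (measurable_gaussianPDF _ _)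
      (ae_of_all _ fun _ ↦ gaussianPDF_lt_top)]
  simp [toReal_gaussianPDF]

lemma one_third_le_inv_sqrt_two_mul_pi : 1 / 3 ≤ (√(2 * π))⁻¹ := by
  rw [one_div]
  exact inv_anti₀ (sqrt_pos.mpr (by positivity)) ((sqrt_le_left (by norm_num)).mpr
    (by nlinarith [pi_lt_d2]))

lemma integral_abs_rpow_gaussianReal_le {q : ℝ} (hq : 0 < q) :
    ∫ x, |x| ^ q ∂gaussianReal 0 1 ≤ 2 * momentScale q := by
  have hplus : Integrable fun x : ℝ ↦ rexp (-(x + √q) ^ 2 / 2) := by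
    simpa using integrable_exp_neg_sub_sq_div_two (-√q)
  have hplus_eq : ∫ x, rexp (-(x + √q) ^ 2 / 2) = √(2 * π) := by
    simpa using integral_exp_neg_sub_sq_div_two (-√q)
  have hbound := ((integrable_exp_neg_sub_sq_div_two √q).add hplus).const_mul (momentScale q)
    |>.const_mul (√(2 * π))⁻¹
  rw [integral_gaussianReal_eq_integral_smul one_ne_zero]
  calc ∫ x, gaussianPDFReal 0 1 x • |x| ^ q
      ≤ ∫ x, (√(2 * π))⁻¹ *
          (momentScale q * (rexp (-(x - √q) ^ 2 / 2) + rexp (-(x + √q) ^ 2 / 2))) := by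
        refine integral_mono_of_nonneg (ae_of_all _ fun x ↦ ?_) hbound (ae_of_all _ fun x ↦ ?_)
        · have := gaussianPDFReal_nonneg 0 1 x; positivity
        · dsimp only
          rw [smul_eq_mul, gaussianPDFReal_zero_one, mul_assoc, mul_comm (rexp _)]
          exact mul_le_mul_of_nonneg_left (abs_rpow_mul_exp_neg_sq_le hq x) (by positivity)
    _ = 2 * momentScale q := by
        rw [integral_const_mul, integral_const_mul,
          integral_add (integrable_exp_neg_sub_sq_div_two √q) hplus,
          integral_exp_neg_sub_sq_div_two, hplus_eq]
        field_simp
        ring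

lemma momentScale_le_setIntegral_abs_rpow_gaussianReal {q : ℝ} (hq : 0 < q) :
    momentScale q ≤ 12 * ∫ x in Icc √q (√q + 4 / 5), |x| ^ q ∂gaussianReal 0 1 := by
  have hG := momentScale_pos hq
  have hinv := one_third_le_inv_sqrt_two_mul_pi
  have hexp : 1 / 3 ≤ rexp (-1) := by linarith [exp_neg_one_gt_d9]
  have hint : IntegrableOn (fun x ↦ gaussianPDFReal 0 1 x * |x| ^ q) (Icc √q (√q + 4 / 5)) :=
    Continuous.integrableOn_Icc <| by
      simp_rw [gaussianPDFReal_zero_one]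
      exact (by fun_prop : Continuous fun x : ℝ ↦ (√(2 * π))⁻¹ * rexp (-x ^ 2 / 2)).mul
        ((continuous_rpow_const hq.le).comp continuous_abs)
  have hlow := setIntegral_ge_of_const_le_real (c := 1 / 3 * (momentScale q * (1 / 3)))
    measurableSet_Icc measure_Icc_lt_top.ne (fun x hx ↦ ?_) hint
  · rw [setIntegral_gaussianReal_eq_setIntegral_mul one_ne_zero measurableSet_Icc]
    rw [Real.volume_real_Icc_of_le (by linarith)] at hlow
    linarith
  · have hx₀ : 0 ≤ x := (sqrt_nonneg q).trans hx.1
    rw [gaussianPDFReal_zero_one, abs_of_nonneg hx₀, mul_assoc, mul_comm (rexp _)]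
    calc 1 / 3 * (momentScale q * (1 / 3)) ≤ (√(2 * π))⁻¹ * (momentScale q * rexp (-1)) := by
          gcongr
      _ ≤ _ := mul_le_mul_of_nonneg_left (momentScale_mul_exp_neg_one_le hq hx.1 hx.2)
          (by positivity)

lemma one_third_le_gaussianReal_real_Icc : 1 / 3 ≤ (gaussianReal 0 1).real (Icc (-1) 1) := by
  have hinv := one_third_le_inv_sqrt_two_mul_pi
  have hlow := setIntegral_ge_of_const_le_real (c := 1 / 6) (f := gaussianPDFReal 0 1)
    (s := Icc (-1) 1)
    measurableSet_Icc measure_Icc_lt_top.ne (fun x hx ↦ ?_)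
    (integrable_gaussianPDFReal 0 1).integrableOn
  · rw [Real.volume_real_Icc_of_le (by norm_num)] at hlow
    rw [measureReal_def, gaussianReal_apply_eq_integral 0 one_ne_zero,
      ENNReal.toReal_ofReal (setIntegral_nonneg measurableSet_Icc
        fun x _ ↦ gaussianPDFReal_nonneg 0 1 x)]
    linarith
  · have hx2 : x ^ 2 ≤ 1 := by nlinarith [hx.1, hx.2]
    have hexp : 1 / 2 ≤ rexp (-x ^ 2 / 2) := by linarith [add_one_le_exp (-x ^ 2 / 2)]
    rw [gaussianPDFReal_zero_one]
    nlinarith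

section ProductMoments

variable {μ : Measure ℝ} {p r : ℝ}

lemma abs_rpow_sub_abs_rpow_rpow_le_add (hr : 0 ≤ r) (a b : ℝ) :
    |(|a| ^ p - |b| ^ p)| ^ r ≤ |a| ^ (p * r) + |b| ^ (p * r) := by
  have ha : 0 ≤ |a| ^ p := rpow_nonneg (abs_nonneg a) p
  have hb : 0 ≤ |b| ^ p := rpow_nonneg (abs_nonneg b) p
  rw [rpow_mul (abs_nonneg a), rpow_mul (abs_nonneg b)]
  rcases le_total (|a| ^ p) (|b| ^ p) with hab | hab
  · have : |(|a| ^ p - |b| ^ p)| ≤ |b| ^ p := by rw [abs_sub_comm, abs_le]; constructor <;> linarith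
    linarith [rpow_le_rpow (abs_nonneg _) this hr, rpow_nonneg ha r]
  · have : |(|a| ^ p - |b| ^ p)| ≤ |a| ^ p := by rw [abs_le]; constructor <;> linarith
    linarith [rpow_le_rpow (abs_nonneg _) this hr, rpow_nonneg hb r]

lemma abs_rpow_mul_div_two_rpow_le (hp : 0 ≤ p) (hr : 0 ≤ r) {a b : ℝ} (ha : 2 ≤ |a| ^ p)
    (hb : |b| ≤ 1) :
    |a| ^ (p * r) / 2 ^ r ≤ |(|a| ^ p - |b| ^ p)| ^ r := by
  rw [rpow_mul (abs_nonneg a), ← div_rpow (by linarith) zero_le_two]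
  have : |b| ^ p ≤ 1 := rpow_le_one (abs_nonneg b) hb hp
  exact rpow_le_rpow (by linarith) ((by linarith : |a| ^ p / 2 ≤ |a| ^ p - |b| ^ p).trans
    (le_abs_self _)) hr

lemma integrable_abs_rpow_sub_abs_rpow_rpow [IsFiniteMeasure μ] (hr : 0 ≤ r)
    (h : Integrable (fun x ↦ |x| ^ (p * r)) μ) :
    Integrable (fun z : ℝ × ℝ ↦ |(|z.1| ^ p - |z.2| ^ p)| ^ r) (μ.prod μ) := by
  refine ((h.comp_fst μ).add (h.comp_snd μ)).mono' (by fun_prop : Measurable _).aestronglyMeasurable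
    (ae_of_all _ fun z ↦ ?_)
  rw [norm_of_nonneg (rpow_nonneg (abs_nonneg _) r)]
  exact abs_rpow_sub_abs_rpow_rpow_le_add hr z.1 z.2

lemma integral_abs_rpow_sub_abs_rpow_rpow_le [IsProbabilityMeasure μ] (hr : 0 ≤ r)
    (h : Integrable (fun x ↦ |x| ^ (p * r)) μ) :
    ∫ z : ℝ × ℝ, |(|z.1| ^ p - |z.2| ^ p)| ^ r ∂μ.prod μ ≤ 2 * ∫ x, |x| ^ (p * r) ∂μ := by
  calc ∫ z : ℝ × ℝ, |(|z.1| ^ p - |z.2| ^ p)| ^ r ∂μ.prod μ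
      ≤ ∫ z : ℝ × ℝ, (|z.1| ^ (p * r) + |z.2| ^ (p * r)) ∂μ.prod μ :=
        integral_mono (integrable_abs_rpow_sub_abs_rpow_rpow hr h)
          ((h.comp_fst μ).add (h.comp_snd μ)) fun z ↦ abs_rpow_sub_abs_rpow_rpow_le_add hr z.1 z.2
    _ = 2 * ∫ x, |x| ^ (p * r) ∂μ := by
        rw [integral_add (h.comp_fst μ) (h.comp_snd μ), integral_fun_fst (fun x ↦ |x| ^ (p * r)),
          integral_fun_snd (fun x ↦ |x| ^ (p * r))]
        simp only [probReal_univ, one_smul]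
        ring

lemma setIntegral_mul_measureReal_div_two_rpow_le [IsFiniteMeasure μ] (hp : 0 ≤ p)
    (hr : 0 ≤ r) (h : Integrable (fun x ↦ |x| ^ (p * r)) μ) {s : Set ℝ} (hs : MeasurableSet s)
    (hs₂ : ∀ x ∈ s, 2 ≤ |x| ^ p) :
    (∫ x in s, |x| ^ (p * r) ∂μ) * μ.real (Icc (-1) 1) / 2 ^ r ≤
      ∫ z : ℝ × ℝ, |(|z.1| ^ p - |z.2| ^ p)| ^ r ∂μ.prod μ := by
  rw [← integral_indicator hs, ← integral_indicator_one measurableSet_Icc, ← integral_prod_mul,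
    ← integral_div]
  refine integral_mono_of_nonneg (ae_of_all _ fun z ↦ ?_)
    (integrable_abs_rpow_sub_abs_rpow_rpow hr h) (ae_of_all _ fun z ↦ ?_)
  · simp only [indicator, Pi.one_apply]
    split_ifs <;> positivity
  · dsimp only
    by_cases hz : z.1 ∈ s ∧ z.2 ∈ Icc (-1) 1
    · simp only [indicator_of_mem hz.1, indicator_of_mem hz.2, Pi.one_apply, mul_one]
      exact abs_rpow_mul_div_two_rpow_le hp hr (hs₂ _ hz.1) (abs_le.mpr hz.2)
    · have : s.indicator (fun x ↦ |x| ^ (p * r)) z.1 * (Icc (-1) 1).indicator 1 z.2 = 0 := by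
        rw [not_and_or] at hz
        rcases hz with hz | hz <;> simp [hz]
      rw [this, zero_div]
      positivity

end ProductMoments

lemma momentScale_le_integral_abs_rpow_gaussianReal {q : ℝ} (hq : 0 < q) :
    momentScale q ≤ 12 * ∫ x, |x| ^ q ∂gaussianReal 0 1 :=
  (momentScale_le_setIntegral_abs_rpow_gaussianReal hq).trans <| mul_le_mul_of_nonneg_left
    (setIntegral_le_integral (integrable_abs_rpow_gaussianReal 0 1 hq.le)
      (ae_of_all _ fun x ↦ rpow_nonneg (abs_nonneg x) q)) (by norm_num)

lemma rpow_one_div_integral_abs_rpow_sub_gaussianReal_le {p r : ℝ} (hp : 0 < p) (hr : 1 ≤ r) :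
    (∫ z : ℝ × ℝ, |(|z.1| ^ p - |z.2| ^ p)| ^ r
        ∂(gaussianReal 0 1).prod (gaussianReal 0 1)) ^ (1 / r) ≤
      48 * r ^ (p / 2) * ∫ x, |x| ^ p ∂gaussianReal 0 1 := by
  have hr₀ : 0 < r := by linarith
  have hpr : 0 < p * r := by positivity
  have hJ : ∫ z : ℝ × ℝ, |(|z.1| ^ p - |z.2| ^ p)| ^ r
      ∂(gaussianReal 0 1).prod (gaussianReal 0 1) ≤ 4 * momentScale (p * r) := by
    linarith [integral_abs_rpow_sub_abs_rpow_rpow_le hr₀.le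
      (integrable_abs_rpow_gaussianReal 0 1 hpr.le), integral_abs_rpow_gaussianReal_le hpr]
  have h4 : (4 : ℝ) ^ (1 / r) ≤ 4 := rpow_le_self_of_one_le (by norm_num) (by
    rw [div_le_one hr₀]; exact hr)
  calc _ ≤ (4 * momentScale (p * r)) ^ (1 / r) :=
        rpow_le_rpow (integral_nonneg fun z ↦ rpow_nonneg (abs_nonneg _) r) hJ (by positivity)
    _ = 4 ^ (1 / r) * (r ^ (p / 2) * momentScale p) := by
        rw [mul_rpow (by norm_num) (momentScale_pos hpr).le, momentScale_mul_rpow_one_div hp.le hr₀]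
    _ ≤ 4 * (r ^ (p / 2) * (12 * ∫ x, |x| ^ p ∂gaussianReal 0 1)) :=
        mul_le_mul h4 (mul_le_mul_of_nonneg_left
          (momentScale_le_integral_abs_rpow_gaussianReal hp) (by positivity))
          (by have := momentScale_pos hp; positivity) (by norm_num)
    _ = _ := by ring

lemma two_le_abs_rpow_of_sqrt_le {p q x : ℝ} (hp : 2 ≤ p) (hq : 2 ≤ q) (hx : √q ≤ x) :
    2 ≤ |x| ^ p := by
  have hqx : q ≤ x ^ 2 := by
    rw [← sq_sqrt (by linarith : 0 ≤ q)]
    exact pow_le_pow_left₀ (sqrt_nonneg _) hx 2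
  have h1x : 1 ≤ |x| := by rw [← sq_le_sq₀ zero_le_one (abs_nonneg x), sq_abs]; linarith
  calc 2 ≤ |x| ^ (2 : ℝ) := by rw [rpow_two, sq_abs]; linarith
    _ ≤ |x| ^ p := rpow_le_rpow_of_exponent_le h1x hp

lemma momentScale_div_le_integral_abs_rpow_sub_gaussianReal {p r : ℝ} (hp : 2 ≤ p)
    (hr : 1 ≤ r) :
    momentScale (p * r) / 36 / 2 ^ r ≤ ∫ z : ℝ × ℝ, |(|z.1| ^ p - |z.2| ^ p)| ^ r
      ∂(gaussianReal 0 1).prod (gaussianReal 0 1) := by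
  have hpr : 2 ≤ p * r := by nlinarith
  refine le_trans (div_le_div_of_nonneg_right ?_ (by positivity))
    (setIntegral_mul_measureReal_div_two_rpow_le (by linarith) (by linarith)
      (integrable_abs_rpow_gaussianReal 0 1 (by linarith))
      (measurableSet_Icc (b := √(p * r) + 4 / 5)) fun x hx ↦ two_le_abs_rpow_of_sqrt_le hp hpr hx.1)
  nlinarith [momentScale_le_setIntegral_abs_rpow_gaussianReal (by linarith : 0 < p * r),
    one_third_le_gaussianReal_real_Icc, momentScale_pos (by linarith : 0 < p * r)]

lemma le_rpow_one_div_integral_abs_rpow_sub_gaussianReal {p r : ℝ} (hp : 2 ≤ p) (hr : 1 ≤ r) :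
    1 / 144 * r ^ (p / 2) * ∫ x, |x| ^ p ∂gaussianReal 0 1 ≤
      (∫ z : ℝ × ℝ, |(|z.1| ^ p - |z.2| ^ p)| ^ r
        ∂(gaussianReal 0 1).prod (gaussianReal 0 1)) ^ (1 / r) := by
  have hr₀ : 0 < r := by linarith
  have hGp := momentScale_pos (by linarith : 0 < p)
  have hGpr := momentScale_pos (by nlinarith : 0 < p * r)
  have h36 : (1 / 36 : ℝ) ≤ (1 / 36) ^ (1 / r) :=
    self_le_rpow_of_le_one (by norm_num) (by norm_num) (by rw [div_le_one hr₀]; exact hr)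
  calc 1 / 144 * r ^ (p / 2) * ∫ x, |x| ^ p ∂gaussianReal 0 1
      ≤ 1 / 36 * (r ^ (p / 2) * momentScale p) / 2 := by
        have := integral_abs_rpow_gaussianReal_le (by linarith : 0 < p)
        have : 0 < r ^ (p / 2) := by positivity
        nlinarith
    _ ≤ (1 / 36) ^ (1 / r) * (r ^ (p / 2) * momentScale p) / 2 := by gcongr
    _ = (momentScale (p * r) / 36 / 2 ^ r) ^ (1 / r) := by
        rw [div_rpow (by positivity : 0 ≤ momentScale (p * r) / 36) (by positivity),
          div_rpow hGpr.le (by norm_num : (0 : ℝ) ≤ 36),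
          momentScale_mul_rpow_one_div (by linarith) hr₀, one_div r,
          rpow_rpow_inv zero_le_two hr₀.ne', div_rpow zero_le_one (by norm_num : (0 : ℝ) ≤ 36),
          one_rpow]
        ring
    _ ≤ _ := rpow_le_rpow (by positivity)
        (momentScale_div_le_integral_abs_rpow_sub_gaussianReal hp hr) (by positivity)

theorem stmt5 :
    ∃ c C : ℝ, 0 < c ∧ 0 < C ∧ ∀ p r : ℝ, 2 ≤ p → 1 ≤ r →
      c * r ^ (p / 2) * (∫ x : ℝ, |x| ^ p ∂(gaussianReal 0 1)) ≤
        (∫ x : ℝ × ℝ, |(|x.1| ^ p - |x.2| ^ p)| ^ r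
          ∂((gaussianReal 0 1).prod (gaussianReal 0 1))) ^ (1 / r) ∧
      (∫ x : ℝ × ℝ, |(|x.1| ^ p - |x.2| ^ p)| ^ r
          ∂((gaussianReal 0 1).prod (gaussianReal 0 1))) ^ (1 / r) ≤
        C * r ^ (p / 2) * (∫ x : ℝ, |x| ^ p ∂(gaussianReal 0 1)) :=
  ⟨1 / 144, 48, by norm_num, by norm_num, fun _ _ hp hr ↦
    ⟨le_rpow_one_div_integral_abs_rpow_sub_gaussianReal hp hr,
      rpow_one_div_integral_abs_rpow_sub_gaussianReal_le (by linarith) hr⟩⟩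
end

section
/- For any p ≥ 2 and r ≥ 1, one has ∫_0^{π/4} (cos^p θ − sin^p θ)^r dθ ≥ c·(2/3)^r / √(p r) for some absolute constant c > 0. -/
theorem stmt7 :
    ∃ c : ℝ, 0 < c ∧ ∀ p r : ℝ, 2 ≤ p → 1 ≤ r →
      c * (2 / 3) ^ r / Real.sqrt (p * r) ≤
        ∫ θ in (0:ℝ)..(Real.pi / 4), (Real.cos θ ^ p - Real.sin θ ^ p) ^ r := by
  refine ⟨1/3, by norm_num, ?_⟩
  intro p r hp hr
  have hp0 : (0:ℝ) < p := by linarith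
  have hr0 : (0:ℝ) < r := by linarith
  have hsp : 0 < Real.sqrt p := Real.sqrt_pos.2 hp0
  set a : ℝ := 1 / (3 * Real.sqrt p) with ha
  have ha0 : 0 < a := by positivity
  have hsp1 : 1 ≤ Real.sqrt p := by
    rw [show (1:ℝ) = Real.sqrt 1 by simp]
    exact Real.sqrt_le_sqrt (by linarith)
  have ha13 : a ≤ 1/3 := by
    rw [ha, div_le_div_iff₀ (by positivity) (by norm_num)]
    nlinarith
  have haπ : a ≤ Real.pi / 4 := by
    have := Real.pi_gt_three
    linarith
  have hsq : a ^ 2 = 1 / (9 * p) := by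
    rw [ha]
    rw [div_pow, mul_pow, Real.sq_sqrt hp0.le]
    norm_num
  set f : ℝ → ℝ := fun θ => (Real.cos θ ^ p - Real.sin θ ^ p) ^ r with hf
  have hcont : Continuous f := by
    apply Continuous.rpow_const
    · exact (Real.continuous_cos.rpow_const fun x => Or.inr (by linarith)).sub
        (Real.continuous_sin.rpow_const fun x => Or.inr (by linarith))
    · exact fun x => Or.inr hr0.le
  -- pointwise bound on [0, a]
  have key : ∀ θ ∈ Set.Icc (0:ℝ) a, ((2:ℝ)/3) ^ r ≤ f θ := by
    intro θ ⟨h0, h1⟩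
    have hθ1 : θ ≤ 1 := by linarith
    have hθsq : θ ^ 2 ≤ 1 / (9 * p) := by
      rw [← hsq]; exact pow_le_pow_left₀ h0 h1 2
    have h9p : (0:ℝ) < 9 * p := by linarith
    have hθsq' : θ ^ 2 ≤ 1 / 18 := by
      calc θ ^ 2 ≤ 1 / (9 * p) := hθsq
        _ ≤ 1/18 := by rw [div_le_div_iff₀ h9p (by norm_num)]; linarith
    -- cos θ ^ p ≥ 1 - p * θ^2 / 2
    have hcos : 1 - p * (θ^2/2) ≤ Real.cos θ ^ p := by
      have h1' : -1 ≤ -(θ^2/2) := by nlinarith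
      have hb := one_add_mul_self_le_rpow_one_add h1' (by linarith : 1 ≤ p)
      have hcb : (1 + -(θ^2/2)) ≤ Real.cos θ := by
        have := Real.one_sub_sq_div_two_le_cos (x := θ); linarith
      have h0b : (0:ℝ) ≤ 1 + -(θ^2/2) := by nlinarith
      calc 1 - p * (θ^2/2) = 1 + p * (-(θ^2/2)) := by ring
        _ ≤ (1 + -(θ^2/2)) ^ p := hb
        _ ≤ Real.cos θ ^ p := Real.rpow_le_rpow h0b hcb (by linarith)
    -- sin θ ^ p ≤ θ ^ 2
    have hsin : Real.sin θ ^ p ≤ θ ^ 2 := by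
      rcases eq_or_lt_of_le h0 with h | h
      · rw [← h]
        simp [Real.zero_rpow (by linarith : p ≠ 0)]
      · have hs0 : 0 ≤ Real.sin θ := Real.sin_nonneg_of_nonneg_of_le_pi h0
          (by nlinarith [Real.pi_gt_three])
        calc Real.sin θ ^ p ≤ θ ^ p :=
              Real.rpow_le_rpow hs0 (Real.sin_le h0) (by linarith)
          _ ≤ θ ^ (2:ℝ) := Real.rpow_le_rpow_of_exponent_ge h hθ1 hp
          _ = θ ^ 2 := by rw [Real.rpow_two]
    have hpθ : p * (θ^2/2) ≤ 1/18 := by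
      have h19 : p * (1/(9*p)) = 1/9 := by field_simp
      nlinarith [mul_le_mul_of_nonneg_left hθsq hp0.le]
    have hbase : (2:ℝ)/3 ≤ Real.cos θ ^ p - Real.sin θ ^ p := by
      have : Real.sin θ ^ p ≤ 1/18 := le_trans hsin hθsq'
      linarith
    exact Real.rpow_le_rpow (by norm_num) hbase hr0.le
  have hnonneg : ∀ θ ∈ Set.Icc a (Real.pi/4), 0 ≤ f θ := by
    intro θ ⟨h0, h1⟩
    have hθ0 : 0 ≤ θ := le_trans ha0.le h0
    have hs : Real.sin θ ≤ Real.cos θ := by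
      calc Real.sin θ ≤ Real.sin (Real.pi/4) :=
            Real.sin_le_sin_of_le_of_le_pi_div_two (by linarith [Real.pi_pos])
              (by linarith [Real.pi_pos]) h1
        _ = Real.cos (Real.pi/4) := by rw [Real.sin_pi_div_four, Real.cos_pi_div_four]
        _ ≤ Real.cos θ := Real.cos_le_cos_of_nonneg_of_le_pi hθ0
            (by linarith [Real.pi_pos]) h1
    have hs0 : 0 ≤ Real.sin θ := Real.sin_nonneg_of_nonneg_of_le_pi hθ0
      (by linarith [Real.pi_pos])
    have : 0 ≤ Real.cos θ ^ p - Real.sin θ ^ p := by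
      have := Real.rpow_le_rpow hs0 hs (by linarith : (0:ℝ) ≤ p)
      linarith
    exact Real.rpow_nonneg this r
  have hint1 : IntervalIntegrable f MeasureTheory.volume 0 a :=
    hcont.intervalIntegrable _ _
  have hint2 : IntervalIntegrable f MeasureTheory.volume a (Real.pi/4) :=
    hcont.intervalIntegrable _ _
  have hsplit : (∫ θ in (0:ℝ)..(Real.pi / 4), f θ)
      = (∫ θ in (0:ℝ)..a, f θ) + ∫ θ in a..(Real.pi/4), f θ :=
    (intervalIntegral.integral_add_adjacent_intervals hint1 hint2).symm
  have h2 : 0 ≤ ∫ θ in a..(Real.pi/4), f θ :=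
    intervalIntegral.integral_nonneg haπ (fun u hu => hnonneg u hu)
  have h1 : a * ((2:ℝ)/3) ^ r ≤ ∫ θ in (0:ℝ)..a, f θ := by
    have := intervalIntegral.integral_mono_on ha0.le
      (intervalIntegrable_const (c := ((2:ℝ)/3)^r)) hint1 key
    simpa using this
  have hfin : 1/3 * (2/3) ^ r / Real.sqrt (p * r) ≤ a * ((2:ℝ)/3) ^ r := by
    have hpr : Real.sqrt p ≤ Real.sqrt (p * r) :=
      Real.sqrt_le_sqrt (by nlinarith)
    have hspr : 0 < Real.sqrt (p * r) := lt_of_lt_of_le hsp hpr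
    have hpow : 0 < ((2:ℝ)/3) ^ r := Real.rpow_pos_of_pos (by norm_num) r
    have key2 : 1/(3*Real.sqrt (p*r)) ≤ a := by
      rw [ha]
      exact one_div_le_one_div_of_le (by positivity) (by nlinarith)
    have heq : 1/3*((2:ℝ)/3)^r/Real.sqrt (p*r) = 1/(3*Real.sqrt (p*r)) * (2/3)^r := by
      field_simp
    rw [heq]
    exact mul_le_mul_of_nonneg_right key2 hpow.le
  calc (1:ℝ)/3 * (2/3) ^ r / Real.sqrt (p * r) ≤ a * ((2:ℝ)/3) ^ r := hfin
    _ ≤ ∫ θ in (0:ℝ)..(Real.pi / 4), f θ := by rw [hsplit]; linarith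
end
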